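/- arXiv:2511.07452 — 3 statements merged into one kernel-verified Lean document; each statement's English description precedes it below -/
import Mathlib

section
/- Let v_1,…,v_n be unit vectors in ℝ^d, w_1,…,w_n real weights with Σ w_j = 1, and t ≥ 1. Then (v_j),(w_j) is a weighted spherical t-design (i.e., integrates all polynomials of degree ≤ t on ℝ^d against normalized surface measure) if and only if Σ_j Σ_k w_j w_k ⟨v_j,v_k⟩^t = b_t(ℝ^d) and Σ_j Σ_k w_j w_k ⟨v_j,v_k⟩^{t−1} = b_{t−1}(ℝ^d). -/
/-!
Orthogonal invariance makes `∫ ⟪x, y⟫ ^ m dσ(x)` depend only on `‖y‖`. Applied to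
`y = a eᵢ + eⱼ` it determines the mixed moments `∫ x_i ^ (2e) x_j ^ 2 dσ`, and integrating
`x_i ^ (2e) ∑ⱼ x_j² = x_i ^ (2e)` then gives `(d + 2e) b_{2e+2} = (2e + 1) b_{2e}`; hence
`∫ ⟪x, y⟫ ^ m dσ = b_m` for every unit vector `y`.

Let `A` and `B` be the `m`-th moment tensors of the weighted nodes and of `σ`. Expanding
`⟪x, y⟫ ^ m = ∑_g ∏ₗ x_{g l} ∏ₗ y_{g l}` gives `‖A - B‖² = ∑ⱼ ∑ₖ wⱼ wₖ ⟪vⱼ, vₖ⟫ ^ m - b_m`, so the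
`m`-th condition says exactly that the nodes integrate every product of `m` coordinates. Multiplying
by powers of `∑ x_i² = 1` reaches all monomials of degree `≤ m` and of the parity of `m`, and the
cases `m = t, t - 1` cover all degrees `≤ t`. Conversely, the design integrates `x ↦ ⟪x, vₖ⟫ ^ m`
for `m ≤ t`, which yields the two identities.
-/

open MeasureTheory

noncomputable def sphericalMoment (d m : ℕ) : ℝ :=
  if Odd m then 0 else
    (∏ i ∈ Finset.range (m / 2), (2 * i + 1 : ℝ)) /
    (∏ i ∈ Finset.range (m / 2), ((d : ℝ) + 2 * i))

open Finset

theorem Continuous.integrable_of_ae_norm_eq_one {E G : Type*} [NormedAddCommGroup E]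
    [ProperSpace E] [MeasurableSpace E] [OpensMeasurableSpace E] [NormedAddCommGroup G]
    {σ : Measure E} [IsFiniteMeasure σ] {f : E → G} (hf : Continuous f)
    (hsupp : ∀ᵐ x ∂σ, ‖x‖ = 1) : Integrable f σ := by
  obtain ⟨C, hC⟩ := (isCompact_sphere (0 : E) 1).exists_bound_of_continuousOn hf.continuousOn
  exact (integrable_const C).mono' hf.aestronglyMeasurable
    (hsupp.mono fun x hx => hC x (by simpa using hx))

section InvariantMeasure

variable {E : Type*} [NormedAddCommGroup E] [InnerProductSpace ℝ E] [MeasurableSpace E]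
  [BorelSpace E] {σ : Measure E}

def IsOrthogonallyInvariant (σ : Measure E) : Prop :=
  ∀ O : E ≃ₗᵢ[ℝ] E, Measure.map O σ = σ

theorem integral_comp_linearIsometryEquiv {G : Type*} [NormedAddCommGroup G] [NormedSpace ℝ G]
    (hinv : IsOrthogonallyInvariant σ) (O : E ≃ₗᵢ[ℝ] E) (f : E → G) :
    ∫ x, f (O x) ∂σ = ∫ x, f x ∂σ :=
  (MeasurePreserving.mk O.continuous.measurable (hinv O)).integral_comp
    O.toHomeomorph.measurableEmbedding f

theorem integral_comp_inner_eq_of_norm_eq (hinv : IsOrthogonallyInvariant σ)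
    (f : ℝ → ℝ) {y z : E} (h : ‖y‖ = ‖z‖) :
    ∫ x, f (inner ℝ x y) ∂σ = ∫ x, f (inner ℝ x z) ∂σ := by
  set O : E ≃ₗᵢ[ℝ] E := (ℝ ∙ (z - y))ᗮ.reflection
  have hOz : O z = y := Submodule.reflection_sub h.symm
  rw [← integral_comp_linearIsometryEquiv hinv O]
  simp_rw [← hOz, LinearIsometryEquiv.inner_map_map]

theorem integral_inner_pow_eq_zero_of_odd (hinv : IsOrthogonallyInvariant σ)
    (y : E) {m : ℕ} (hm : Odd m) : ∫ x, inner ℝ x y ^ m ∂σ = 0 := by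
  have h := integral_comp_linearIsometryEquiv hinv (LinearIsometryEquiv.neg ℝ)
    fun x => inner ℝ x y ^ m
  simp only [LinearIsometryEquiv.coe_neg, inner_neg_left, hm.neg_pow,
    integral_neg] at h
  linarith

theorem integral_inner_pow_eq_norm_pow_mul (hinv : IsOrthogonallyInvariant σ)
    {z : E} (hz : ‖z‖ = 1) (y : E) (m : ℕ) :
    ∫ x, inner ℝ x y ^ m ∂σ = ‖y‖ ^ m * ∫ x, inner ℝ x z ^ m ∂σ := by
  rw [integral_comp_inner_eq_of_norm_eq hinv (· ^ m) (z := ‖y‖ • z)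
    (by rw [norm_smul, hz, norm_norm, mul_one]), ← integral_const_mul]
  simp_rw [real_inner_smul_right, mul_pow]

end InvariantMeasure

theorem sphericalMoment_zero (d : ℕ) : sphericalMoment d 0 = 1 := by
  simp [sphericalMoment]

theorem sphericalMoment_of_odd (d : ℕ) {m : ℕ} (hm : Odd m) : sphericalMoment d m = 0 :=
  if_pos hm

theorem add_mul_sphericalMoment_two_mul_add_two {d : ℕ} (hd : 0 < d) (e : ℕ) :
    (d + 2 * e : ℝ) * sphericalMoment d (2 * e + 2) = (2 * e + 1) * sphericalMoment d (2 * e) := by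
  rw [sphericalMoment, sphericalMoment,
    if_neg (by rw [Nat.not_odd_iff_even]; exact ⟨e + 1, by ring⟩), if_neg (by simp),
    show (2 * e + 2) / 2 = e + 1 by omega, show 2 * e / 2 = e by omega,
    prod_range_succ, prod_range_succ]
  field_simp

section Coordinates

variable {ι : Type*} [Fintype ι]

theorem EuclideanSpace.sum_sq_eq_one_of_norm_eq_one {x : EuclideanSpace ℝ ι} (hx : ‖x‖ = 1) :
    ∑ i, x i ^ 2 = 1 := by
  rw [← EuclideanSpace.real_norm_sq_eq, hx, one_pow]

section Single

variable [DecidableEq ι]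

theorem EuclideanSpace.inner_single_one_right (x : EuclideanSpace ℝ ι) (i : ι) :
    inner ℝ x (EuclideanSpace.single i (1 : ℝ)) = x i := by
  simp [EuclideanSpace.inner_single_right]

theorem EuclideanSpace.inner_single_add_single_right (x : EuclideanSpace ℝ ι) (i j : ι)
    (a b : ℝ) :
    inner ℝ x (EuclideanSpace.single i a + EuclideanSpace.single j b) = a * x i + b * x j := by
  simp [inner_add_right, EuclideanSpace.inner_single_right]

theorem EuclideanSpace.norm_single_add_single_sq {i j : ι} (hij : i ≠ j) (a b : ℝ) :
    ‖EuclideanSpace.single i a + EuclideanSpace.single j b‖ ^ 2 = a ^ 2 + b ^ 2 := by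
  rw [← real_inner_self_eq_norm_sq, EuclideanSpace.inner_single_add_single_right]
  simp [hij, hij.symm, sq]

end Single

variable {σ : Measure (EuclideanSpace ℝ ι)}

theorem integral_coord_pow_eq (hinv : IsOrthogonallyInvariant σ) (i j : ι) (m : ℕ) :
    ∫ x, x i ^ m ∂σ = ∫ x, x j ^ m ∂σ := by
  classical
  simpa only [EuclideanSpace.inner_single_one_right] using
    integral_comp_inner_eq_of_norm_eq hinv (· ^ m) (y := EuclideanSpace.single i 1)
      (z := EuclideanSpace.single j 1) (by simp)

theorem integral_mul_coord_add_mul_coord_pow (hinv : IsOrthogonallyInvariant σ) {i j : ι}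
    (hij : i ≠ j) (a b : ℝ) (n : ℕ) :
    ∫ x, (a * x i + b * x j) ^ (2 * n) ∂σ = (a ^ 2 + b ^ 2) ^ n * ∫ x, x j ^ (2 * n) ∂σ := by
  classical
  have h := integral_inner_pow_eq_norm_pow_mul hinv (z := EuclideanSpace.single j 1) (by simp)
    (EuclideanSpace.single i a + EuclideanSpace.single j b) (2 * n)
  simpa only [EuclideanSpace.inner_single_add_single_right, EuclideanSpace.inner_single_one_right,
    pow_mul, EuclideanSpace.norm_single_add_single_sq hij] using h

/-- Compare the coefficients of `a ^ (2k)` in the polynomial identity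
`∫ (a x_i + x_j) ^ (2n) dσ = (a² + 1) ^ n ∫ x_j ^ (2n) dσ`. -/
theorem choose_mul_integral_pow_mul_pow [IsFiniteMeasure σ] (hsupp : ∀ᵐ x ∂σ, ‖x‖ = 1)
    (hinv : IsOrthogonallyInvariant σ) {i j : ι} (hij : i ≠ j) (n k : ℕ) :
    ((2 * n).choose (2 * k) : ℝ) * ∫ x, x i ^ (2 * k) * x j ^ (2 * n - 2 * k) ∂σ =
      (n.choose k : ℝ) * ∫ x, x j ^ (2 * n) ∂σ := by
  open Polynomial in
  set c : ℕ → ℝ := fun l => ((2 * n).choose l : ℝ) * ∫ x, x i ^ l * x j ^ (2 * n - l) ∂σ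
  have hpoly : ∑ l ∈ range (2 * n + 1), C (c l) * X ^ l =
      C (∫ x, x j ^ (2 * n) ∂σ) * expand ℝ 2 ((1 + X) ^ n) := by
    refine Polynomial.funext fun a => ?_
    have hint : ∀ l, Integrable (fun x : EuclideanSpace ℝ ι => x i ^ l * x j ^ (2 * n - l)) σ :=
      fun l => Continuous.integrable_of_ae_norm_eq_one (by fun_prop) hsupp
    have hexp : ∀ x : EuclideanSpace ℝ ι, (a * x i + 1 * x j) ^ (2 * n) =
        ∑ l ∈ range (2 * n + 1), a ^ l * ((2 * n).choose l * (x i ^ l * x j ^ (2 * n - l))) := by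
      intro x
      rw [add_pow]
      exact sum_congr rfl fun l _ => by ring
    calc eval a (∑ l ∈ range (2 * n + 1), C (c l) * X ^ l)
        = ∫ x, (a * x i + 1 * x j) ^ (2 * n) ∂σ := by
          simp_rw [hexp]
          rw [integral_finsetSum _ fun l _ => ((hint l).const_mul _).const_mul _]
          simp only [eval_finsetSum, eval_mul, eval_C, eval_pow, eval_X, integral_const_mul, c]
          exact sum_congr rfl fun l _ => by ring
      _ = _ := by
          rw [integral_mul_coord_add_mul_coord_pow hinv hij]
          simp only [one_pow, map_pow, map_add, map_one, expand_X, eval_mul, eval_C, eval_pow,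
            eval_add, eval_one, eval_X]
          ring
  have hcoeff := congr_arg (coeff · (2 * k)) hpoly
  simp only [finsetSum_coeff, coeff_C_mul, coeff_X_pow, mul_ite, mul_one, mul_zero,
    sum_ite_eq, coeff_expand two_pos, coeff_one_add_X_pow] at hcoeff
  rw [if_pos (dvd_mul_right 2 k), Nat.mul_div_cancel_left k two_pos] at hcoeff
  rcases le_or_gt k n with hk | hk
  · rw [if_pos (mem_range.2 (by omega))] at hcoeff
    exact hcoeff.trans (mul_comm _ _)
  · simp [Nat.choose_eq_zero_of_lt hk, Nat.choose_eq_zero_of_lt (by omega : 2 * n < 2 * k)]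

theorem two_mul_add_one_mul_integral_pow_mul_sq [IsFiniteMeasure σ] (hsupp : ∀ᵐ x ∂σ, ‖x‖ = 1)
    (hinv : IsOrthogonallyInvariant σ) {i j : ι} (hij : i ≠ j) (e : ℕ) :
    (2 * e + 1 : ℝ) * ∫ x, x i ^ (2 * e) * x j ^ 2 ∂σ = ∫ x, x j ^ (2 * e + 2) ∂σ := by
  have h := choose_mul_integral_pow_mul_pow hsupp hinv hij (e + 1) e
  rw [show 2 * (e + 1) - 2 * e = 2 by omega, show 2 * (e + 1) = 2 * e + 2 by ring,
    ← Nat.choose_symm (by omega), show 2 * e + 2 - 2 * e = 2 by omega, Nat.cast_choose_two,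
    Nat.choose_succ_self_right, Nat.cast_succ] at h
  have he : (e : ℝ) + 1 ≠ 0 := by positivity
  apply mul_left_cancel₀ he
  push_cast at h
  linear_combination h

theorem card_add_mul_integral_coord_pow_succ_succ [IsFiniteMeasure σ] (hsupp : ∀ᵐ x ∂σ, ‖x‖ = 1)
    (hinv : IsOrthogonallyInvariant σ) (i : ι) (e : ℕ) :
    (Fintype.card ι + 2 * e : ℝ) * ∫ x, x i ^ (2 * e + 2) ∂σ =
      (2 * e + 1) * ∫ x, x i ^ (2 * e) ∂σ := by
  classical
  have hsq : ∫ x, x i ^ (2 * e) ∂σ = ∑ j, ∫ x, x i ^ (2 * e) * x j ^ 2 ∂σ := by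
    rw [← integral_finsetSum _ fun j _ =>
      Continuous.integrable_of_ae_norm_eq_one (by fun_prop) hsupp]
    refine integral_congr_ae (hsupp.mono fun x hx => ?_)
    simp only [← mul_sum, EuclideanSpace.sum_sq_eq_one_of_norm_eq_one hx, mul_one]
  have hterm : ∀ j, (2 * e + 1 : ℝ) * ∫ x, x i ^ (2 * e) * x j ^ 2 ∂σ =
      ∫ x, x i ^ (2 * e + 2) ∂σ + if j = i then 2 * e * ∫ x, x i ^ (2 * e + 2) ∂σ else 0 := by
    intro j
    rcases eq_or_ne j i with rfl | hji
    · simp_rw [if_pos, ← pow_add]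
      ring
    · rw [if_neg hji, add_zero, two_mul_add_one_mul_integral_pow_mul_sq hsupp hinv hji.symm,
        integral_coord_pow_eq hinv j i]
  rw [hsq, mul_sum, sum_congr rfl fun j _ => hterm j, sum_add_distrib, sum_const, card_univ,
    sum_ite_eq', if_pos (mem_univ i), nsmul_eq_mul]
  ring

theorem integral_coord_pow_eq_sphericalMoment [IsProbabilityMeasure σ]
    (hsupp : ∀ᵐ x ∂σ, ‖x‖ = 1) (hinv : IsOrthogonallyInvariant σ) (i : ι) (m : ℕ) :
    ∫ x, x i ^ m ∂σ = sphericalMoment (Fintype.card ι) m := by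
  classical
  obtain ⟨e, rfl | rfl⟩ := Nat.even_or_odd' m
  · induction e with
    | zero => simp [sphericalMoment_zero]
    | succ e ih =>
      have hne : (Fintype.card ι + 2 * e : ℝ) ≠ 0 := by
        have : 0 < Fintype.card ι := Fintype.card_pos_iff.2 ⟨i⟩
        positivity
      apply mul_left_cancel₀ hne
      rw [mul_add_one, card_add_mul_integral_coord_pow_succ_succ hsupp hinv,
        add_mul_sphericalMoment_two_mul_add_two (Fintype.card_pos_iff.2 ⟨i⟩), ih]
  · have hodd : Odd (2 * e + 1) := odd_two_mul_add_one e
    simpa only [EuclideanSpace.inner_single_one_right, sphericalMoment_of_odd _ hodd] using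
      integral_inner_pow_eq_zero_of_odd hinv (EuclideanSpace.single i 1) hodd

theorem integral_inner_pow_eq_sphericalMoment [IsProbabilityMeasure σ]
    (hsupp : ∀ᵐ x ∂σ, ‖x‖ = 1) (hinv : IsOrthogonallyInvariant σ) {y : EuclideanSpace ℝ ι}
    (hy : ‖y‖ = 1) (m : ℕ) :
    ∫ x, inner ℝ x y ^ m ∂σ = sphericalMoment (Fintype.card ι) m := by
  classical
  obtain ⟨i⟩ : Nonempty ι := by
    by_contra h
    rw [not_nonempty_iff] at h
    simp [Subsingleton.elim y 0] at hy
  rw [integral_comp_inner_eq_of_norm_eq hinv (· ^ m) (z := EuclideanSpace.single i 1)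
    (by simp [hy])]
  simpa only [EuclideanSpace.inner_single_one_right] using
    integral_coord_pow_eq_sphericalMoment hsupp hinv i m

end Coordinates

section Cubature

variable {E ν : Type*} [MeasurableSpace E] [Fintype ν]

def CubatureExact (σ : Measure E) (v : ν → E) (w : ν → ℝ) (f : E → ℝ) : Prop :=
  ∑ j, w j * f (v j) = ∫ x, f x ∂σ

variable {σ : Measure E} {v : ν → E} {w : ν → ℝ}

theorem CubatureExact.const_mul {f : E → ℝ} (h : CubatureExact σ v w f) (c : ℝ) :
    CubatureExact σ v w fun x => c * f x := by
  unfold CubatureExact at *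
  rw [integral_const_mul, ← h, mul_sum]
  exact sum_congr rfl fun j _ => mul_left_comm _ _ _

theorem CubatureExact.finsetSum {α : Type*} {s : Finset α} {f : α → E → ℝ}
    (hint : ∀ a ∈ s, Integrable (f a) σ) (h : ∀ a ∈ s, CubatureExact σ v w (f a)) :
    CubatureExact σ v w fun x => ∑ a ∈ s, f a x := by
  unfold CubatureExact at *
  rw [integral_finsetSum s hint, ← sum_congr rfl h]
  simp only [mul_sum]
  exact sum_comm

end Cubature

theorem EuclideanSpace.inner_pow_card_eq_sum_prod {ι κ : Type*} [Fintype ι] [Fintype κ]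
    [DecidableEq κ] (x y : EuclideanSpace ℝ ι) :
    inner ℝ x y ^ Fintype.card κ = ∑ g : κ → ι, (∏ l, x (g l)) * ∏ l, y (g l) := by
  simp only [PiLp.inner_apply, RCLike.inner_apply, conj_trivial, ← card_univ, ← prod_const,
    prod_univ_sum, Fintype.piFinset_univ, prod_mul_distrib]
  exact sum_congr rfl fun g _ => mul_comm _ _

section SphericalCubature

variable {ι ν : Type*} [Fintype ι] [Fintype ν] {σ : Measure (EuclideanSpace ℝ ι)}
  {v : ν → EuclideanSpace ℝ ι} {w : ν → ℝ}

/-- On the sphere `∑_{g : Fin e → ι} ∏ₗ x_{g l}² = ‖x‖^(2e) = 1`, so multiplying by it changes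
neither side. -/
theorem CubatureExact.of_forall_mul_prod_sq [IsFiniteMeasure σ] (hsupp : ∀ᵐ x ∂σ, ‖x‖ = 1)
    (hv : ∀ j, ‖v j‖ = 1) {f : EuclideanSpace ℝ ι → ℝ} (hf : Continuous f) (e : ℕ)
    (h : ∀ g : Fin e → ι, CubatureExact σ v w fun x => f x * ∏ l, x (g l) ^ 2) :
    CubatureExact σ v w f := by
  have hone : ∀ x : EuclideanSpace ℝ ι, ‖x‖ = 1 → ∑ g : Fin e → ι, ∏ l, x (g l) ^ 2 = 1 :=
    fun x hx => by
      rw [← Fintype.sum_pow (fun i => x i ^ 2), EuclideanSpace.sum_sq_eq_one_of_norm_eq_one hx,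
        one_pow]
  have hsum := CubatureExact.finsetSum (s := univ)
    (fun g _ => Continuous.integrable_of_ae_norm_eq_one (by fun_prop) hsupp) fun g _ => h g
  unfold CubatureExact at hsum ⊢
  simp only [← mul_sum] at hsum
  rw [integral_congr_ae (g := f) (hsupp.mono fun x hx => by simp only [hone x hx, mul_one])] at hsum
  simpa only [hone _ (hv _), mul_one] using hsum

variable [IsProbabilityMeasure σ]

theorem sum_sq_sub_integral_prod_coord (hsupp : ∀ᵐ x ∂σ, ‖x‖ = 1)
    (hinv : IsOrthogonallyInvariant σ) (hv : ∀ j, ‖v j‖ = 1) (hw : ∑ j, w j = 1)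
    (κ : Type*) [Fintype κ] [DecidableEq κ] :
    ∑ g : κ → ι, (∑ j, w j * ∏ l, v j (g l) - ∫ x, ∏ l, x (g l) ∂σ) ^ 2 =
      ∑ j, ∑ k, w j * w k * inner ℝ (v j) (v k) ^ Fintype.card κ -
        sphericalMoment (Fintype.card ι) (Fintype.card κ) := by
  set φ : (κ → ι) → EuclideanSpace ℝ ι → ℝ := fun g x => ∏ l, x (g l)
  set A : (κ → ι) → ℝ := fun g => ∑ j, w j * φ g (v j)
  set B : (κ → ι) → ℝ := fun g => ∫ x, φ g x ∂σ
  have hint : ∀ g, Integrable (φ g) σ :=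
    fun g => Continuous.integrable_of_ae_norm_eq_one (by fun_prop) hsupp
  have hB : ∀ y : EuclideanSpace ℝ ι, ‖y‖ = 1 →
      ∑ g, B g * φ g y = sphericalMoment (Fintype.card ι) (Fintype.card κ) := fun y hy => by
    simp only [B, ← integral_mul_const]
    rw [← integral_finsetSum _ fun g _ => (hint g).mul_const _,
      ← integral_inner_pow_eq_sphericalMoment hsupp hinv hy (Fintype.card κ)]
    simp only [φ, EuclideanSpace.inner_pow_card_eq_sum_prod]
  have hAA : ∑ g, A g * A g = ∑ j, ∑ k, w j * w k * inner ℝ (v j) (v k) ^ Fintype.card κ := by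
    simp only [A, φ, EuclideanSpace.inner_pow_card_eq_sum_prod, sum_mul, mul_sum]
    rw [sum_comm]
    refine sum_congr rfl fun j _ => ?_
    rw [sum_comm]
    exact sum_congr rfl fun k _ => sum_congr rfl fun g _ => by ring
  have hBA : ∑ g, B g * A g = sphericalMoment (Fintype.card ι) (Fintype.card κ) := by
    simp only [A, mul_sum]
    rw [sum_comm]
    simp only [mul_left_comm (B _), ← mul_sum, hB _ (hv _), ← sum_mul, hw, one_mul]
  have hBB : ∑ g, B g * B g = sphericalMoment (Fintype.card ι) (Fintype.card κ) := by
    simp only [B, ← integral_const_mul]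
    rw [← integral_finsetSum _ fun g _ => (hint g).const_mul _]
    rw [integral_congr_ae (hsupp.mono fun x hx => hB x hx)]
    simp
  calc ∑ g, (A g - B g) ^ 2 = ∑ g, A g * A g - 2 * ∑ g, B g * A g + ∑ g, B g * B g := by
        simp only [mul_sum, ← sum_sub_distrib, ← sum_add_distrib]
        exact sum_congr rfl fun g _ => by ring
    _ = _ := by rw [hAA, hBA, hBB]; ring

theorem cubatureExact_prod_coord (hsupp : ∀ᵐ x ∂σ, ‖x‖ = 1)
    (hinv : IsOrthogonallyInvariant σ) (hv : ∀ j, ‖v j‖ = 1) (hw : ∑ j, w j = 1)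
    {κ : Type*} [Fintype κ]
    (hm : ∑ j, ∑ k, w j * w k * inner ℝ (v j) (v k) ^ Fintype.card κ =
      sphericalMoment (Fintype.card ι) (Fintype.card κ)) (g : κ → ι) :
    CubatureExact σ v w fun x => ∏ l, x (g l) := by
  classical
  have h := sum_sq_sub_integral_prod_coord hsupp hinv hv hw κ
  rw [hm, sub_self, sum_eq_zero_iff_of_nonneg fun g _ => sq_nonneg _] at h
  exact sub_eq_zero.1 (pow_eq_zero_iff two_ne_zero |>.1 (h g (mem_univ g)))

theorem cubatureExact_prod_pow (hsupp : ∀ᵐ x ∂σ, ‖x‖ = 1)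
    (hinv : IsOrthogonallyInvariant σ) (hv : ∀ j, ‖v j‖ = 1) (hw : ∑ j, w j = 1) {t : ℕ}
    (ht : ∑ j, ∑ k, w j * w k * inner ℝ (v j) (v k) ^ t = sphericalMoment (Fintype.card ι) t)
    (ht' : ∑ j, ∑ k, w j * w k * inner ℝ (v j) (v k) ^ (t - 1) =
      sphericalMoment (Fintype.card ι) (t - 1))
    (α : ι → ℕ) (hα : ∑ i, α i ≤ t) :
    CubatureExact σ v w fun x => ∏ i, x i ^ α i := by
  obtain ⟨e, m, hm, hmt⟩ : ∃ e m, m = ∑ i, α i + 2 * e ∧ (m = t ∨ m = t - 1) := by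
    rcases Nat.even_or_odd (t - ∑ i, α i) with ⟨e, he⟩ | ⟨e, he⟩
    · exact ⟨e, t, by omega, Or.inl rfl⟩
    · exact ⟨e, t - 1, by omega, Or.inr rfl⟩
  refine CubatureExact.of_forall_mul_prod_sq hsupp hv (by fun_prop) e fun g => ?_
  -- `∏ᵢ xᵢ ^ αᵢ * ∏ₗ x_{g l} ^ 2` is a product of `m` coordinates.
  have hcard : Fintype.card ((Σ i, Fin (α i)) ⊕ (Fin e ⊕ Fin e)) = m := by
    simp [hm, two_mul]
  have hexact := cubatureExact_prod_coord hsupp hinv hv hw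
    (by rcases hmt with rfl | rfl <;> rwa [hcard]) (Sum.elim Sigma.fst (Sum.elim g g))
  convert hexact using 2 with x
  simp only [Fintype.prod_sum_type, Sum.elim_inl, Sum.elim_inr, Fintype.prod_sigma,
    prod_const, card_univ, Fintype.card_fin, sq, prod_mul_distrib]

theorem cubatureExact_eval_of_totalDegree_le (hsupp : ∀ᵐ x ∂σ, ‖x‖ = 1)
    (hinv : IsOrthogonallyInvariant σ) (hv : ∀ j, ‖v j‖ = 1) (hw : ∑ j, w j = 1) {t : ℕ}
    (ht : ∑ j, ∑ k, w j * w k * inner ℝ (v j) (v k) ^ t = sphericalMoment (Fintype.card ι) t)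
    (ht' : ∑ j, ∑ k, w j * w k * inner ℝ (v j) (v k) ^ (t - 1) =
      sphericalMoment (Fintype.card ι) (t - 1))
    {p : MvPolynomial ι ℝ} (hp : p.totalDegree ≤ t) :
    CubatureExact σ v w fun x => MvPolynomial.eval (fun i => x i) p := by
  simp only [MvPolynomial.eval_eq']
  refine CubatureExact.finsetSum
    (fun α _ => Continuous.integrable_of_ae_norm_eq_one (by fun_prop) hsupp) fun α hα => ?_
  refine (cubatureExact_prod_pow hsupp hinv hv hw ht ht' α ?_).const_mul _
  simpa [Finsupp.sum_fintype] using (MvPolynomial.le_totalDegree hα).trans hp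

theorem sum_sum_mul_inner_pow_eq_sphericalMoment (hsupp : ∀ᵐ x ∂σ, ‖x‖ = 1)
    (hinv : IsOrthogonallyInvariant σ) (hv : ∀ j, ‖v j‖ = 1) (hw : ∑ j, w j = 1) {m : ℕ}
    (h : ∀ k, CubatureExact σ v w fun x => inner ℝ x (v k) ^ m) :
    ∑ j, ∑ k, w j * w k * inner ℝ (v j) (v k) ^ m = sphericalMoment (Fintype.card ι) m := by
  calc ∑ j, ∑ k, w j * w k * inner ℝ (v j) (v k) ^ m
      = ∑ k, w k * ∑ j, w j * inner ℝ (v j) (v k) ^ m := by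
        simp only [mul_sum]
        rw [sum_comm]
        exact sum_congr rfl fun k _ => sum_congr rfl fun j _ => by ring
    _ = sphericalMoment (Fintype.card ι) m := by
        simp only [fun k => (h k).trans (integral_inner_pow_eq_sphericalMoment hsupp hinv (hv k) m),
          ← sum_mul, hw, one_mul]

end SphericalCubature

theorem MvPolynomial.exists_totalDegree_le_eval_eq_inner_pow {ι : Type*} [Fintype ι]
    (y : EuclideanSpace ℝ ι) (m : ℕ) :
    ∃ p : MvPolynomial ι ℝ, p.totalDegree ≤ m ∧
      ∀ x : EuclideanSpace ℝ ι, MvPolynomial.eval (fun i => x i) p = inner ℝ x y ^ m := by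
  refine ⟨(∑ i, C (y i) * X i) ^ m, ?_, fun x => ?_⟩
  · simpa using
      ((IsHomogeneous.sum _ _ 1 fun i _ => isHomogeneous_C_mul_X (y i) i).pow m).totalDegree_le
  · simp [PiLp.inner_apply, mul_comm]

theorem weighted_t_design_characterisation_general (d : ℕ)
    (σ : Measure (EuclideanSpace ℝ (Fin d))) [IsProbabilityMeasure σ]
    (hsupp : ∀ᵐ x ∂σ, ‖x‖ = 1)
    (hinv : ∀ O : (EuclideanSpace ℝ (Fin d)) ≃ₗᵢ[ℝ] (EuclideanSpace ℝ (Fin d)),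
      Measure.map (⇑O) σ = σ)
    (t : ℕ)
    (n : ℕ) (v : Fin n → EuclideanSpace ℝ (Fin d)) (hv : ∀ j, ‖v j‖ = 1)
    (w : Fin n → ℝ) (hw : ∑ j, w j = 1) :
    (∀ p : MvPolynomial (Fin d) ℝ, p.totalDegree ≤ t →
        ∑ j, w j * MvPolynomial.eval (fun i => v j i) p =
          ∫ x, MvPolynomial.eval (fun i => x i) p ∂σ) ↔
    (∑ j, ∑ k, w j * w k * (inner ℝ (v j) (v k) : ℝ) ^ t = sphericalMoment d t ∧
     ∑ j, ∑ k, w j * w k * (inner ℝ (v j) (v k) : ℝ) ^ (t - 1) =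
       sphericalMoment d (t - 1)) := by
  constructor
  · intro H
    have hpow : ∀ m ≤ t, ∀ k, CubatureExact σ v w fun x => inner ℝ x (v k) ^ m := by
      intro m hm k
      obtain ⟨p, hpm, hp⟩ := MvPolynomial.exists_totalDegree_le_eval_eq_inner_pow (v k) m
      simpa only [CubatureExact, hp] using H p (hpm.trans hm)
    simpa only [Fintype.card_fin] using
      And.intro (sum_sum_mul_inner_pow_eq_sphericalMoment hsupp hinv hv hw (hpow t le_rfl))
        (sum_sum_mul_inner_pow_eq_sphericalMoment hsupp hinv hv hw (hpow (t - 1) (Nat.sub_le t 1)))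
  · rintro ⟨ht, ht'⟩ p hp
    exact cubatureExact_eval_of_totalDegree_le hsupp hinv hv hw (by rwa [Fintype.card_fin])
      (by rwa [Fintype.card_fin]) hp

/-- Unit vectors `v_j` with weights `w_j` summing to 1 form a weighted spherical
`t`-design (they integrate every polynomial of degree at most `t` against the
rotation-invariant probability measure `σ` on the sphere) iff
`Σ Σ w_j w_k ⟨v_j,v_k⟩^t = b_t(ℝ^d)` and `Σ Σ w_j w_k ⟨v_j,v_k⟩^{t-1} = b_{t-1}(ℝ^d)`. -/
theorem weighted_t_design_characterisation (d : ℕ) (hd : 2 ≤ d)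
    (σ : Measure (EuclideanSpace ℝ (Fin d))) [IsProbabilityMeasure σ]
    (hsupp : ∀ᵐ x ∂σ, ‖x‖ = 1)
    (hinv : ∀ O : (EuclideanSpace ℝ (Fin d)) ≃ₗᵢ[ℝ] (EuclideanSpace ℝ (Fin d)),
      Measure.map (⇑O) σ = σ)
    (t : ℕ) (ht : 1 ≤ t)
    (n : ℕ) (v : Fin n → EuclideanSpace ℝ (Fin d)) (hv : ∀ j, ‖v j‖ = 1)
    (w : Fin n → ℝ) (hw : ∑ j, w j = 1) :
    (∀ p : MvPolynomial (Fin d) ℝ, p.totalDegree ≤ t →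
        ∑ j, w j * MvPolynomial.eval (fun i => v j i) p =
          ∫ x, MvPolynomial.eval (fun i => x i) p ∂σ) ↔
    (∑ j, ∑ k, w j * w k * (inner ℝ (v j) (v k) : ℝ) ^ t = sphericalMoment d t ∧
     ∑ j, ∑ k, w j * w k * (inner ℝ (v j) (v k) : ℝ) ^ (t - 1) =
       sphericalMoment d (t - 1)) :=
  weighted_t_design_characterisation_general d σ hsupp hinv t n v hv w hw
end

section
/- Let v_1,…,v_n be vectors in ℂ^d, not all zero, forming a tight frame for ℂ^d. Then (v_j), viewed as vectors in ℝ^{2d}, is a tight frame for ℝ^{2d} if and only if Σ_j Σ_k ⟨v_j,v_k⟩² = 0; moreover, Σ_j Σ_k ⟨v_j,v_k⟩² ≥ 0 always holds. -/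
/-!
Write `S x = ∑ ⟪v j, x⟫ v j` for the frame operator and `T x = ∑ ⟪x, v j⟫ v j` for its
conjugate-linear companion. Since `Re z = (z + z̄) / 2`, the real frame operator is `(S + T) / 2`;
with `S = c • id`, the frame is tight over `ℝ` iff `T` is a scalar multiple of the identity, and a
conjugate-linear map can only be so if it is zero. On the other hand
`c * ∑ⱼ ∑ₖ ⟪v j, v k⟫² = ∑ⱼ ‖T (v j)‖²`, which vanishes iff `T` vanishes on the frame vectors,
i.e. iff `T = 0` (`T` is symmetric: `⟪T x, y⟫ = ⟪T y, x⟫`).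
-/

open Finset ComplexConjugate
open scoped InnerProductSpace

lemma eq_zero_of_forall_semilinear_apply_eq_smul {E : Type*} [AddCommGroup E] [Module ℂ E]
    [Nontrivial E] [NoZeroSMulDivisors ℂ E] {f : E →ₗ⋆[ℂ] E} {a : ℂ} (h : ∀ x, f x = a • x) :
    a = 0 := by
  obtain ⟨x, hx⟩ := exists_ne (0 : E)
  have hI := h (Complex.I • x)
  rw [map_smulₛₗ, h x, smul_smul, smul_smul, Complex.conj_I] at hI
  have h2 : (2 * Complex.I) * a = 0 := by linear_combination -smul_left_injective ℂ hx hI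
  exact (mul_eq_zero.mp h2).resolve_left (by simp)

section Frames

variable {E ι : Type*} [NormedAddCommGroup E] [InnerProductSpace ℂ E] [Fintype ι] (v : ι → E)

noncomputable def frameOperator : E →ₗ[ℂ] E where
  toFun x := ∑ j, ⟪v j, x⟫_ℂ • v j
  map_add' x y := by simp only [inner_add_right, add_smul, sum_add_distrib]
  map_smul' a x := by simp only [inner_smul_right, mul_smul, smul_sum, RingHom.id_apply]

noncomputable def conjFrameOperator : E →ₗ⋆[ℂ] E where
  toFun x := ∑ j, ⟪x, v j⟫_ℂ • v j
  map_add' x y := by simp only [inner_add_left, add_smul, sum_add_distrib]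
  map_smul' a x := by simp only [inner_smul_left, mul_smul, smul_sum]

@[simp]
lemma frameOperator_apply (x : E) : frameOperator v x = ∑ j, ⟪v j, x⟫_ℂ • v j := rfl

@[simp]
lemma conjFrameOperator_apply (x : E) : conjFrameOperator v x = ∑ j, ⟪x, v j⟫_ℂ • v j := rfl

lemma inner_conjFrameOperator_right (x y : E) :
    ⟪y, conjFrameOperator v x⟫_ℂ = ∑ j, ⟪x, v j⟫_ℂ * ⟪y, v j⟫_ℂ := by
  simp only [conjFrameOperator_apply, inner_sum, inner_smul_right]

lemma inner_conjFrameOperator_left (x y : E) :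
    ⟪conjFrameOperator v x, y⟫_ℂ = ∑ j, ⟪v j, x⟫_ℂ * ⟪v j, y⟫_ℂ := by
  simp only [conjFrameOperator_apply, sum_inner, inner_smul_left, inner_conj_symm]

lemma inner_conjFrameOperator_comm (x y : E) :
    ⟪conjFrameOperator v x, y⟫_ℂ = ⟪conjFrameOperator v y, x⟫_ℂ := by
  simp only [inner_conjFrameOperator_left, mul_comm]

lemma inner_conjFrameOperator_self (x : E) :
    ⟪conjFrameOperator v x, x⟫_ℂ = ∑ j, ⟪v j, x⟫_ℂ ^ 2 := by
  simp only [inner_conjFrameOperator_left, sq]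

lemma two_smul_sum_re_inner_smul (x : E) :
    (2 : ℝ) • ∑ j, (⟪v j, x⟫_ℂ).re • v j = frameOperator v x + conjFrameOperator v x := by
  simp only [frameOperator_apply, conjFrameOperator_apply, smul_sum, ← sum_add_distrib, smul_smul,
    ← add_smul]
  refine sum_congr rfl fun j _ => ?_
  rw [← Complex.coe_smul, ← inner_conj_symm x (v j), Complex.add_conj]

lemma conjFrameOperator_eq_zero_iff :
    conjFrameOperator v = 0 ↔ ∀ j, conjFrameOperator v (v j) = 0 := by
  refine ⟨fun h j => by rw [h, LinearMap.zero_apply], fun h => LinearMap.ext fun x => ?_⟩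
  rw [LinearMap.zero_apply, ← inner_self_eq_zero (𝕜 := ℂ), inner_conjFrameOperator_right]
  simp only [inner_conjFrameOperator_comm v x, h, inner_zero_left, mul_zero, sum_const_zero]

lemma sum_inner_conjFrameOperator_frameOperator :
    ∑ j, ⟪conjFrameOperator v (v j), frameOperator v (v j)⟫_ℂ =
      ((∑ j, ‖conjFrameOperator v (v j)‖ ^ 2 : ℝ) : ℂ) := by
  calc ∑ j, ⟪conjFrameOperator v (v j), frameOperator v (v j)⟫_ℂ
      = ∑ j, ∑ i, ⟪v i, v j⟫_ℂ * ⟪conjFrameOperator v (v i), v j⟫_ℂ := by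
        simp only [frameOperator_apply, inner_sum, inner_smul_right]
        exact sum_congr rfl fun j _ => sum_congr rfl fun i _ => by
          rw [inner_conjFrameOperator_comm]
    _ = ∑ i, ⟪conjFrameOperator v (v i), conjFrameOperator v (v i)⟫_ℂ := by
        rw [sum_comm]
        simp only [inner_conjFrameOperator_right]
    _ = _ := by
        push_cast
        simp only [inner_self_eq_norm_sq_to_K]
        rfl

variable {v} {c : ℝ}

lemma mul_sum_sum_inner_sq_eq_sum_norm_conjFrameOperator_sq
    (hS : ∀ x, frameOperator v x = (c : ℂ) • x) :
    (c : ℂ) * ∑ j, ∑ k, ⟪v j, v k⟫_ℂ ^ 2 = ((∑ j, ‖conjFrameOperator v (v j)‖ ^ 2 : ℝ) : ℂ) := by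
  rw [← sum_inner_conjFrameOperator_frameOperator, sum_comm, mul_sum]
  refine sum_congr rfl fun k _ => ?_
  rw [hS, inner_smul_right, inner_conjFrameOperator_self]

lemma exists_real_tight_iff_conjFrameOperator_eq_zero [Nontrivial E] (hc : 0 < c)
    (hS : ∀ x, frameOperator v x = (c : ℂ) • x) :
    (∃ c' : ℝ, 0 < c' ∧ ∀ x, ∑ j, (⟪v j, x⟫_ℂ).re • v j = c' • x) ↔
      conjFrameOperator v = 0 := by
  constructor
  · rintro ⟨c', -, hR⟩
    have hT : ∀ x, conjFrameOperator v x = (2 * c' - c : ℂ) • x := fun x => by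
      have h := two_smul_sum_re_inner_smul v x
      rw [hR, hS, smul_smul, ← Complex.coe_smul] at h
      rw [sub_smul, ← Complex.ofReal_ofNat, ← Complex.ofReal_mul, h, add_sub_cancel_left]
    have h0 := eq_zero_of_forall_semilinear_apply_eq_smul hT
    exact LinearMap.ext fun x => by rw [hT, h0, zero_smul, LinearMap.zero_apply]
  · intro hT
    refine ⟨c / 2, half_pos hc, fun x => ?_⟩
    have h := two_smul_sum_re_inner_smul v x
    rw [hS, hT, LinearMap.zero_apply, add_zero, Complex.coe_smul] at h
    rw [← inv_smul_smul₀ (two_ne_zero (α := ℝ)) (∑ j, _), h, smul_smul, inv_mul_eq_div]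

end Frames

theorem complex_tight_frame_real_tight_frame_iff_general (d : ℕ)
    (n : ℕ) (v : Fin n → EuclideanSpace ℂ (Fin d)) (hv : ∃ j, v j ≠ 0)
    (htight : ∃ c : ℝ, 0 < c ∧ ∀ x : EuclideanSpace ℂ (Fin d),
      ∑ j, (inner ℂ (v j) x : ℂ) • v j = (c : ℂ) • x) :
    ((∃ c : ℝ, 0 < c ∧ ∀ x : EuclideanSpace ℂ (Fin d),
        ∑ j, ((inner ℂ (v j) x : ℂ)).re • v j = c • x) ↔
      ∑ j, ∑ k, (inner ℂ (v j) (v k) : ℂ) ^ 2 = 0) ∧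
    0 ≤ (∑ j, ∑ k, (inner ℂ (v j) (v k) : ℂ) ^ 2).re ∧
    (∑ j, ∑ k, (inner ℂ (v j) (v k) : ℂ) ^ 2).im = 0 := by
  obtain ⟨c, hc, hS⟩ := htight
  obtain ⟨j₀, hj₀⟩ := hv
  have : Nontrivial (EuclideanSpace ℂ (Fin d)) := ⟨⟨v j₀, 0, hj₀⟩⟩
  set N := ∑ j, ‖conjFrameOperator v (v j)‖ ^ 2
  have hA : ∑ j, ∑ k, ⟪v j, v k⟫_ℂ ^ 2 = ((N / c : ℝ) : ℂ) := by
    rw [Complex.ofReal_div, eq_div_iff (by exact_mod_cast hc.ne'), mul_comm]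
    exact mul_sum_sum_inner_sq_eq_sum_norm_conjFrameOperator_sq hS
  have hN : N = 0 ↔ conjFrameOperator v = 0 := by
    simp only [conjFrameOperator_eq_zero_iff, N, sum_eq_zero_iff_of_nonneg fun j _ => sq_nonneg _,
      mem_univ, true_implies, sq_eq_zero_iff, norm_eq_zero]
  rw [hA, exists_real_tight_iff_conjFrameOperator_eq_zero hc hS, ← hN, Complex.ofReal_eq_zero,
    div_eq_zero_iff, or_iff_left hc.ne', Complex.ofReal_re, Complex.ofReal_im]
  exact ⟨Iff.rfl, by positivity, rfl⟩

/-- For a tight frame `(v_j)` for `ℂ^d`, the vectors, viewed in `ℝ^{2d}` (real inner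
product `Re⟨·,·⟩`), form a tight frame for `ℝ^{2d}` iff `Σ Σ ⟨v_j,v_k⟩² = 0`;
moreover `Σ Σ ⟨v_j,v_k⟩²` is always real and nonnegative. -/
theorem complex_tight_frame_real_tight_frame_iff (d : ℕ) (hd : 1 ≤ d)
    (n : ℕ) (v : Fin n → EuclideanSpace ℂ (Fin d)) (hv : ∃ j, v j ≠ 0)
    (htight : ∃ c : ℝ, 0 < c ∧ ∀ x : EuclideanSpace ℂ (Fin d),
      ∑ j, (inner ℂ (v j) x : ℂ) • v j = (c : ℂ) • x) :
    ((∃ c : ℝ, 0 < c ∧ ∀ x : EuclideanSpace ℂ (Fin d),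
        ∑ j, ((inner ℂ (v j) x : ℂ)).re • v j = c • x) ↔
      ∑ j, ∑ k, (inner ℂ (v j) (v k) : ℂ) ^ 2 = 0) ∧
    0 ≤ (∑ j, ∑ k, (inner ℂ (v j) (v k) : ℂ) ^ 2).re ∧
    (∑ j, ∑ k, (inner ℂ (v j) (v k) : ℂ) ^ 2).im = 0 :=
  complex_tight_frame_real_tight_frame_iff_general d n v hv htight
end

section
/- Let v_1,…,v_n be distinct unit vectors in ℂ^d (d ≥ 1) whose pairwise inner products ⟨v_j,v_k⟩ (j ≠ k) all have real part equal to a fixed a ∈ ℝ. Then n ≤ 2d+1 if a ≠ 0, and n ≤ 2d if a = 0. Moreover, if n = 2d+1 with a ≠ 0, then a = −1/(2d). -/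
/-!
Viewed as a real inner product space, `ℂ^d` has dimension `2d` and real inner product
`Re ⟨x, y⟩`, so the `v_j` form a real spherical code with the single inner product `a`.
Its Gram matrix is `(1 - a) I + a J`, which is nonsingular unless `a = 1` (excluded by
distinctness) or `1 + (m - 1) a = 0`. Hence any `m > 2d` of the vectors, being linearly
dependent, force `1 + (m - 1) a = 0`; applying this to `m = 2d + 1` and `m = 2d + 2` gives
all three claims.
-/

open Finset RealInnerProductSpace

section ConstantInnerProduct

variable {E ι : Type*} [NormedAddCommGroup E] [InnerProductSpace ℝ E] [Fintype ι]
  {u : ι → E} {a : ℝ}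

theorem inner_sum_smul_of_inner_eq_const (h1 : ∀ i, ⟪u i, u i⟫ = 1)
    (ha : ∀ i j, i ≠ j → ⟪u i, u j⟫ = a) (g : ι → ℝ) (k : ι) :
    ⟪u k, ∑ i, g i • u i⟫ = (1 - a) * g k + a * ∑ i, g i := by
  classical
  have hterm : ∀ i, g i * ⟪u k, u i⟫ = a * g i + if i = k then (1 - a) * g i else 0 := by
    intro i
    by_cases hik : i = k
    · subst hik
      rw [h1, if_pos rfl]
      ring
    · rw [ha k i (Ne.symm hik), if_neg hik]
      ring
  simp only [inner_sum, real_inner_smul_right, hterm, sum_add_distrib, ← mul_sum,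
    sum_ite_eq', mem_univ, if_true]
  ring

theorem linearIndependent_of_inner_eq_const (h1 : ∀ i, ⟪u i, u i⟫ = 1)
    (ha : ∀ i j, i ≠ j → ⟪u i, u j⟫ = a) (ha1 : a ≠ 1)
    (hdet : 1 + (Fintype.card ι - 1) * a ≠ 0) : LinearIndependent ℝ u := by
  rw [Fintype.linearIndependent_iff]
  intro g hg
  have hcoord : ∀ k, (1 - a) * g k + a * ∑ i, g i = 0 := fun k => by
    rw [← inner_sum_smul_of_inner_eq_const h1 ha, hg, inner_zero_right]
  have hS : ∑ i, g i = 0 := by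
    have htotal : (1 + (Fintype.card ι - 1) * a) * ∑ i, g i = 0 := by
      have := Finset.sum_eq_zero (s := univ) fun k _ => hcoord k
      rw [sum_add_distrib, ← mul_sum, sum_const, card_univ, nsmul_eq_mul] at this
      linear_combination this
    exact (mul_eq_zero.mp htotal).resolve_left hdet
  intro k
  have hk := hcoord k
  rw [hS, mul_zero, add_zero] at hk
  exact (mul_eq_zero.mp hk).resolve_left (sub_ne_zero.mpr (Ne.symm ha1))

theorem one_add_card_sub_one_mul_eq_zero_of_finrank_lt [FiniteDimensional ℝ E]
    (h1 : ∀ i, ⟪u i, u i⟫ = 1) (ha : ∀ i j, i ≠ j → ⟪u i, u j⟫ = a) (ha1 : a ≠ 1)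
    (hcard : Module.finrank ℝ E < Fintype.card ι) :
    1 + (Fintype.card ι - 1) * a = 0 := by
  by_contra hdet
  exact hcard.not_ge (linearIndependent_of_inner_eq_const h1 ha ha1 hdet).fintype_card_le_finrank

end ConstantInnerProduct

theorem finrank_real_euclideanSpace_complex (ι : Type*) [Fintype ι] :
    Module.finrank ℝ (EuclideanSpace ℂ ι) = 2 * Fintype.card ι := by
  rw [← Module.finrank_mul_finrank ℝ ℂ, Complex.finrank_real_complex, finrank_euclideanSpace]

theorem EuclideanSpace.real_inner_eq_re_inner {ι : Type*} [Fintype ι]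
    (x y : EuclideanSpace ℂ ι) : ⟪x, y⟫ = (inner ℂ x y).re := by
  simp [PiLp.inner_apply, Complex.re_sum]

/-- If the pairwise inner products of `n` distinct unit vectors in `ℂ^d` all have
real part equal to a fixed `a`, then `n ≤ 2d+1` when `a ≠ 0` and `n ≤ 2d` when
`a = 0`; moreover if `n = 2d+1` (with `a ≠ 0`) then `a = −1/(2d)`. -/
theorem fixed_real_part_bound (d : ℕ) (hd : 1 ≤ d) (a : ℝ)
    (n : ℕ) (v : Fin n → EuclideanSpace ℂ (Fin d))
    (hv : ∀ j, ‖v j‖ = 1) (hdist : Function.Injective v)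
    (hangles : ∀ j k, j ≠ k → ((inner ℂ (v j) (v k) : ℂ)).re = a) :
    (a ≠ 0 → n ≤ 2 * d + 1) ∧
    (a = 0 → n ≤ 2 * d) ∧
    (n = 2 * d + 1 → a ≠ 0 → a = -1 / (2 * d)) := by
  have hreal : ∀ j k, j ≠ k → ⟪v j, v k⟫ = a := fun j k hjk =>
    (EuclideanSpace.real_inner_eq_re_inner (v j) (v k)).trans (hangles j k hjk)
  have hunit : ∀ j, ⟪v j, v j⟫ = 1 := fun j => by rw [real_inner_self_eq_norm_sq, hv, one_pow]
  have key : ∀ m, 2 * d < m → m ≤ n → 1 + ((m : ℝ) - 1) * a = 0 := by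
    intro m hm hmn
    have ha1 : a ≠ 1 := by
      have h01 : (⟨0, by omega⟩ : Fin n) ≠ ⟨1, by omega⟩ := by simp
      rw [← hreal _ _ h01]
      exact fun h => h01 (hdist ((inner_eq_one_iff_of_norm_eq_one (hv _) (hv _)).mp h))
    simpa using one_add_card_sub_one_mul_eq_zero_of_finrank_lt (u := v ∘ Fin.castLE hmn)
      (fun i => hunit _) (fun i j hij => hreal _ _ ((Fin.castLE_injective hmn).ne hij)) ha1
      (by simpa [finrank_real_euclideanSpace_complex] using hm)
  have h2d1 := key (2 * d + 1)
  have h2d2 := key (2 * d + 2)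
  push_cast at h2d1 h2d2
  refine ⟨fun ha => ?_, fun ha => ?_, fun hn _ => ?_⟩
  · by_contra! hn
    exact ha (by linarith [h2d1 (by omega) (by omega), h2d2 (by omega) hn])
  · by_contra! hn
    simpa [ha] using h2d1 (by omega) hn
  · have hd' : (0 : ℝ) < d := by exact_mod_cast hd
    field_simp
    linarith [h2d1 (by omega) hn.ge]
end
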